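/- arXiv:2005.10718 — 9 statements merged into one kernel-verified Lean document; each statement's English description precedes it below -/
import Mathlib

section
/- (Lower bound in the I-W coding theorem for a single source.) Let D ≥ 2 be an integer, let p : Fin N → ℝ be a probability distribution with p i > 0 for all i and ∑ i, p i = 1, and let w : Fin N → ℝ satisfy w i > 0 for all i. Then for every length assignment l : Fin N → ℕ satisfying Kraft's inequality ∑ i, (D : ℝ)^(-(l i : ℝ)) ≤ 1, the importance-aware weighted expected codeword length satisfies ∑ i, p i * w i * (l i : ℝ) ≥ 𝓛(w,X), where 𝓛(w,X) = -∑ i, p i * w i * log_D (p i * w i / H_w) and H_w = ∑ i, p i * w i. -/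
/-- Lower bound in the I-W coding theorem for a single source. -/
theorem iw_coding_single_lower
    (N D : ℕ) (hD : 2 ≤ D)
    (p w : Fin N → ℝ)
    (hp : ∀ i, 0 < p i) (hpsum : ∑ i, p i = 1)
    (hw : ∀ i, 0 < w i)
    (l : Fin N → ℕ)
    (hkraft : ∑ i, (D : ℝ) ^ (-(l i : ℝ)) ≤ 1) :
    ∑ i, p i * w i * (l i : ℝ) ≥
      -∑ i, p i * w i *
        (Real.log (p i * w i / ∑ j, p j * w j) / Real.log D) := by
  rcases Nat.eq_zero_or_pos N with hN | hN
  · subst hN; simp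
  set H : ℝ := ∑ j, p j * w j with hH
  have hHpos : 0 < H :=
    Finset.sum_pos (fun i _ => mul_pos (hp i) (hw i)) ⟨⟨0, hN⟩, Finset.mem_univ _⟩
  have hD1 : (1 : ℝ) < (D : ℝ) := by exact_mod_cast Nat.lt_of_lt_of_le one_lt_two hD
  have hDpos : (0 : ℝ) < D := lt_trans one_pos hD1
  have hc : 0 < Real.log D := Real.log_pos hD1
  set c : ℝ := Real.log D with hcdef
  -- key per-term inequality
  have key : ∀ i : Fin N,
      p i * w i - H * (D : ℝ) ^ (-(l i : ℝ)) ≤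
        c * (p i * w i * (l i : ℝ)) + p i * w i * Real.log (p i * w i / H) := by
    intro i
    set a : ℝ := p i * w i with ha
    have hapos : 0 < a := mul_pos (hp i) (hw i)
    set q : ℝ := (D : ℝ) ^ (-(l i : ℝ)) with hq
    have hqpos : 0 < q := Real.rpow_pos_of_pos hDpos _
    have hlogq : Real.log q = -(l i : ℝ) * c := by
      rw [hq, Real.log_rpow hDpos]
    have hx : Real.log (H * q / a) ≤ H * q / a - 1 :=
      Real.log_le_sub_one_of_pos (by positivity)
    have h2 : a * Real.log (H * q / a) ≤ H * q - a := by
      have := mul_le_mul_of_nonneg_left hx (le_of_lt hapos)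
      calc a * Real.log (H * q / a) ≤ a * (H * q / a - 1) := this
        _ = H * q - a := by field_simp
    have hexp : a * Real.log (H * q / a) =
        -(c * (a * (l i : ℝ)) + a * Real.log (a / H)) := by
      rw [Real.log_div (by positivity) (ne_of_gt hapos),
        Real.log_mul (ne_of_gt hHpos) (ne_of_gt hqpos), hlogq,
        Real.log_div (ne_of_gt hapos) (ne_of_gt hHpos)]
      ring
    rw [hexp] at h2
    linarith
  -- sum up
  have hsum : H - H * (∑ i, (D : ℝ) ^ (-(l i : ℝ))) ≤
      c * (∑ i, p i * w i * (l i : ℝ)) + ∑ i, p i * w i * Real.log (p i * w i / H) := by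
    calc H - H * (∑ i, (D : ℝ) ^ (-(l i : ℝ)))
        = ∑ i, (p i * w i - H * (D : ℝ) ^ (-(l i : ℝ))) := by
          rw [Finset.sum_sub_distrib, ← Finset.mul_sum, hH]
      _ ≤ ∑ i, (c * (p i * w i * (l i : ℝ)) + p i * w i * Real.log (p i * w i / H)) :=
          Finset.sum_le_sum fun i _ => key i
      _ = _ := by rw [Finset.sum_add_distrib, ← Finset.mul_sum]
    
  have hnn : 0 ≤ H - H * (∑ i, (D : ℝ) ^ (-(l i : ℝ))) := by
    nlinarith
  have hfinal : 0 ≤ c * (∑ i, p i * w i * (l i : ℝ)) +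
      ∑ i, p i * w i * Real.log (p i * w i / H) := le_trans hnn hsum
  rw [ge_iff_le]
  have hrw : -∑ i, p i * w i * (Real.log (p i * w i / H) / c)
      = -(∑ i, p i * w i * Real.log (p i * w i / H)) / c := by
    simp only [← mul_div_assoc]
    rw [← Finset.sum_div, neg_div]
  rw [hrw, div_le_iff₀ hc]
  nlinarith
end

section
/- (Upper bound in the I-W coding theorem for a single source.) Let D ≥ 2 be an integer, let p : Fin N → ℝ be a probability distribution with p i > 0 for all i and ∑ i, p i = 1, and let w : Fin N → ℝ satisfy w i > 0 for all i. Then there exists a length assignment l : Fin N → ℕ satisfying Kraft's inequality ∑ i, (D : ℝ)^(-(l i : ℝ)) ≤ 1 such that ∑ i, p i * w i * (l i : ℝ) < 𝓛(w,X) + H_w, where 𝓛(w,X) = -∑ i, p i * w i * log_D (p i * w i / H_w) and H_w = ∑ i, p i * w i. -/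
/-- Upper bound in the I-W coding theorem for a single source. -/
theorem iw_coding_single_upper
    (N D : ℕ) (hD : 2 ≤ D)
    (p w : Fin N → ℝ)
    (hp : ∀ i, 0 < p i) (hpsum : ∑ i, p i = 1)
    (hw : ∀ i, 0 < w i) :
    ∃ l : Fin N → ℕ,
      (∑ i, (D : ℝ) ^ (-(l i : ℝ)) ≤ 1) ∧
      ∑ i, p i * w i * (l i : ℝ) <
        (-∑ i, p i * w i *
          (Real.log (p i * w i / ∑ j, p j * w j) / Real.log D)) +
        ∑ j, p j * w j := by
  have hN : 0 < N := by
    by_contra h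
    push_neg at h
    interval_cases N
    simp at hpsum
  have hD1 : (1:ℝ) < (D:ℝ) := by exact_mod_cast lt_of_lt_of_le one_lt_two hD
  have hD0 : (0:ℝ) < (D:ℝ) := lt_trans one_pos hD1
  have hDne : (D:ℝ) ≠ 1 := ne_of_gt hD1
  set H : ℝ := ∑ j, p j * w j with hHdef
  have hpw : ∀ i, 0 < p i * w i := fun i => mul_pos (hp i) (hw i)
  have hH : 0 < H := Finset.sum_pos (fun i _ => hpw i) (by
    simpa using Finset.univ_nonempty_iff.mpr ⟨⟨0, hN⟩⟩)
  set q : Fin N → ℝ := fun i => p i * w i / H with hqdef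
  have hq0 : ∀ i, 0 < q i := fun i => div_pos (hpw i) hH
  have hq1 : ∀ i, q i ≤ 1 := by
    intro i
    rw [div_le_one hH]
    exact Finset.single_le_sum (fun j _ => (hpw j).le) (Finset.mem_univ i)
  have hqsum : ∑ i, q i = 1 := by
    simp only [hqdef]
    rw [← Finset.sum_div, ← hHdef, div_self hH.ne']
  set l : Fin N → ℕ := fun i => ⌈-Real.logb D (q i)⌉₊ with hldef
  have hlognonneg : ∀ i, 0 ≤ -Real.logb D (q i) := fun i =>
    neg_nonneg.mpr (Real.logb_nonpos hD1 (hq0 i).le (hq1 i))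
  refine ⟨l, ?_, ?_⟩
  · calc ∑ i, (D:ℝ) ^ (-(l i : ℝ)) ≤ ∑ i, q i := by
          apply Finset.sum_le_sum
          intro i _
          have h1 : -Real.logb D (q i) ≤ (l i : ℝ) := Nat.le_ceil _
          have h2 : -(l i : ℝ) ≤ Real.logb D (q i) := by linarith
          calc (D:ℝ) ^ (-(l i : ℝ)) ≤ (D:ℝ) ^ Real.logb D (q i) :=
                Real.rpow_le_rpow_left_iff hD1 |>.mpr h2
            _ = q i := Real.rpow_logb hD0 hDne (hq0 i)
      _ = 1 := hqsum
  · have key : ∀ i, p i * w i * (l i : ℝ) <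
        p i * w i * (-Real.logb D (q i) + 1) := by
      intro i
      apply mul_lt_mul_of_pos_left _ (hpw i)
      exact Nat.ceil_lt_add_one (hlognonneg i)
    have hsum := Finset.sum_lt_sum_of_nonempty
      (Finset.univ_nonempty_iff.mpr ⟨⟨0, hN⟩⟩) (fun i _ => key i)
    calc ∑ i, p i * w i * (l i : ℝ)
        < ∑ i, p i * w i * (-Real.logb D (q i) + 1) := hsum
      _ = (-∑ i, p i * w i * (Real.log (q i) / Real.log D)) + H := by
          rw [← Finset.sum_neg_distrib, ← Finset.sum_add_distrib]
          apply Finset.sum_congr rfl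
          intro i _
          rw [Real.logb]
          ring
end

section
/- (Kraft feasibility of the ceiling lengths.) Let D ≥ 2 be an integer, let p : Fin N → ℝ be a probability distribution with p i > 0 for all i and ∑ i, p i = 1, and let w : Fin N → ℝ satisfy w i > 0 for all i. Set H_w = ∑ i, p i * w i. Then p i * w i ≤ H_w for every i (so that log_D (H_w / (p i * w i)) ≥ 0), and the integer lengths l i = ⌈log_D (H_w / (p i * w i))⌉ satisfy Kraft's inequality ∑ i, (D : ℝ)^(-(l i : ℝ)) ≤ 1. -/
/-- Kraft feasibility of the ceiling lengths. -/
theorem iw_ceiling_lengths_kraft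
    (N D : ℕ) (hD : 2 ≤ D)
    (p w : Fin N → ℝ)
    (hp : ∀ i, 0 < p i) (hpsum : ∑ i, p i = 1)
    (hw : ∀ i, 0 < w i) :
    (∀ i, p i * w i ≤ ∑ j, p j * w j) ∧
    (∑ i, (D : ℝ) ^
        (-((⌈Real.log ((∑ j, p j * w j) / (p i * w i)) / Real.log D⌉₊ : ℕ) : ℝ))
      ≤ 1) := by
  have hD1 : (1 : ℝ) < (D : ℝ) := by exact_mod_cast lt_of_lt_of_le one_lt_two hD
  have hlogD : 0 < Real.log D := Real.log_pos hD1
  have ht : ∀ i, 0 < p i * w i := fun i => mul_pos (hp i) (hw i)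
  have hle : ∀ i, p i * w i ≤ ∑ j, p j * w j := by
    intro i
    exact Finset.single_le_sum (f := fun j => p j * w j)
      (fun j _ => (ht j).le) (Finset.mem_univ i)
  have hNE : (Finset.univ : Finset (Fin N)).Nonempty := by
    by_contra h
    rw [Finset.not_nonempty_iff_eq_empty] at h
    rw [h, Finset.sum_empty] at hpsum
    norm_num at hpsum
  have hH : 0 < ∑ j, p j * w j := Finset.sum_pos (fun i _ => ht i) hNE
  refine ⟨hle, ?_⟩
  have key : ∀ i, (D : ℝ) ^
      (-((⌈Real.log ((∑ j, p j * w j) / (p i * w i)) / Real.log D⌉₊ : ℕ) : ℝ))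
      ≤ (p i * w i) / (∑ j, p j * w j) := by
    intro i
    set x := Real.log ((∑ j, p j * w j) / (p i * w i)) / Real.log D with hx
    have h1 : (D : ℝ) ^ (-((⌈x⌉₊ : ℕ) : ℝ)) ≤ (D : ℝ) ^ (-x) := by
      apply Real.rpow_le_rpow_of_exponent_le hD1.le
      exact neg_le_neg (Nat.le_ceil x)
    have h2 : (D : ℝ) ^ (-x) = (p i * w i) / (∑ j, p j * w j) := by
      rw [Real.rpow_def_of_pos (lt_trans one_pos hD1)]
      have : Real.log D * -x = Real.log ((p i * w i) / (∑ j, p j * w j)) := by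
        rw [hx, mul_neg, mul_div_cancel₀ _ hlogD.ne', ← Real.log_inv, inv_div]
      rw [this, Real.exp_log (div_pos (ht i) hH)]
    exact h2 ▸ h1
  calc ∑ i, (D : ℝ) ^
      (-((⌈Real.log ((∑ j, p j * w j) / (p i * w i)) / Real.log D⌉₊ : ℕ) : ℝ))
      ≤ ∑ i, (p i * w i) / (∑ j, p j * w j) := Finset.sum_le_sum fun i _ => key i
    _ = 1 := by rw [← Finset.sum_div, div_self hH.ne']
end

section
/- (The relaxed optimum attains the importance-aware measure.) Let D ≥ 2 be an integer, let p : Fin N → ℝ be a probability distribution with p i > 0 for all i and ∑ i, p i = 1, and let w : Fin N → ℝ satisfy w i > 0 for all i. Set H_w = ∑ i, p i * w i. Then the real-valued lengths l̃ i = -log_D (p i * w i / H_w) satisfy Kraft's inequality with equality, ∑ i, (D : ℝ)^(-(l̃ i)) = 1, and achieve ∑ i, p i * w i * l̃ i = 𝓛(w,X), where 𝓛(w,X) = -∑ i, p i * w i * log_D (p i * w i / H_w). Moreover, for every real-valued assignment l : Fin N → ℝ with ∑ i, (D : ℝ)^(-(l i)) ≤ 1, one has ∑ i, p i * w i * l i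 ≥ 𝓛(w,X). -/
/-- The relaxed optimum attains the importance-aware measure. -/
theorem iw_relaxed_optimum
    (N D : ℕ) (hD : 2 ≤ D)
    (p w : Fin N → ℝ)
    (hp : ∀ i, 0 < p i) (hpsum : ∑ i, p i = 1)
    (hw : ∀ i, 0 < w i) :
    (∑ i, (D : ℝ) ^
        (-(-(Real.log (p i * w i / ∑ j, p j * w j) / Real.log D))) = 1) ∧
    (∑ i, p i * w i *
        (-(Real.log (p i * w i / ∑ j, p j * w j) / Real.log D)) =
      -∑ i, p i * w i *
        (Real.log (p i * w i / ∑ j, p j * w j) / Real.log D)) ∧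
    (∀ l : Fin N → ℝ, (∑ i, (D : ℝ) ^ (-(l i)) ≤ 1) →
      ∑ i, p i * w i * l i ≥
        -∑ i, p i * w i *
          (Real.log (p i * w i / ∑ j, p j * w j) / Real.log D)) := by
  have hN : 0 < N := by
    by_contra h
    push_neg at h
    interval_cases N
    simp at hpsum
  have hD1 : (1 : ℝ) < (D : ℝ) := by exact_mod_cast lt_of_lt_of_le one_lt_two (by exact_mod_cast hD)
  have hD0 : (0 : ℝ) < (D : ℝ) := lt_trans one_pos hD1
  have hlogD : 0 < Real.log D := Real.log_pos hD1
  set H : ℝ := ∑ j, p j * w j with hHdef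
  have hH : 0 < H := Finset.sum_pos (fun i _ => mul_pos (hp i) (hw i))
    (Finset.univ_nonempty_iff.mpr (Fin.pos_iff_nonempty.mp hN))
  have ha : ∀ i, 0 < p i * w i := fun i => mul_pos (hp i) (hw i)
  have hq : ∀ i : Fin N, 0 < p i * w i / H := fun i => div_pos (ha i) hH
  refine ⟨?_, ?_, ?_⟩
  · have : ∀ i : Fin N,
        (D : ℝ) ^ (-(-(Real.log (p i * w i / H) / Real.log D))) = p i * w i / H := by
      intro i
      rw [neg_neg]
      have : Real.log (p i * w i / H) / Real.log D = Real.logb D (p i * w i / H) := rfl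
      rw [this, Real.rpow_logb hD0 (ne_of_gt hD1) (hq i)]
    rw [Finset.sum_congr rfl (fun i _ => this i), ← Finset.sum_div, ← hHdef,
      div_self (ne_of_gt hH)]
  · simp [mul_neg, Finset.sum_neg_distrib]
  · intro l hl
    have key1 : ∀ i : Fin N,
        p i * w i * Real.log ((D : ℝ) ^ (-(l i)) / (p i * w i / H)) ≤
          H * (D : ℝ) ^ (-(l i)) - p i * w i := by
      intro i
      have hpos : 0 < (D : ℝ) ^ (-(l i)) / (p i * w i / H) :=
        div_pos (Real.rpow_pos_of_pos hD0 _) (hq i)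
      have h1 := Real.log_le_sub_one_of_pos hpos
      have h2 : p i * w i * Real.log ((D : ℝ) ^ (-(l i)) / (p i * w i / H)) ≤
          p i * w i * ((D : ℝ) ^ (-(l i)) / (p i * w i / H) - 1) :=
        mul_le_mul_of_nonneg_left h1 (le_of_lt (ha i))
      have h3 : p i * w i * ((D : ℝ) ^ (-(l i)) / (p i * w i / H) - 1) =
          H * (D : ℝ) ^ (-(l i)) - p i * w i := by
        rw [mul_sub, mul_one, div_div_eq_mul_div, mul_comm (p i * w i),
          div_mul_cancel₀ _ (ne_of_gt (ha i))]
        ring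
      linarith
    have key : ∑ i, p i * w i * Real.log ((D : ℝ) ^ (-(l i)) / (p i * w i / H)) ≤ 0 := by
      calc ∑ i, p i * w i * Real.log ((D : ℝ) ^ (-(l i)) / (p i * w i / H))
          ≤ ∑ i, (H * (D : ℝ) ^ (-(l i)) - p i * w i) :=
            Finset.sum_le_sum (fun i _ => key1 i)
        _ = H * (∑ i, (D : ℝ) ^ (-(l i))) - H := by
            rw [Finset.sum_sub_distrib, ← Finset.mul_sum, ← hHdef]
        _ ≤ 0 := by nlinarith
    have expand : ∀ i : Fin N,
        p i * w i * Real.log ((D : ℝ) ^ (-(l i)) / (p i * w i / H)) =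
          -(Real.log D) * (p i * w i * l i) - p i * w i * Real.log (p i * w i / H) := by
      intro i
      rw [Real.log_div (ne_of_gt (Real.rpow_pos_of_pos hD0 _)) (ne_of_gt (hq i)),
        Real.log_rpow hD0]
      ring
    rw [Finset.sum_congr rfl (fun i _ => expand i)] at key
    have key2 : -(Real.log D) * (∑ i, p i * w i * l i) -
        ∑ i, p i * w i * Real.log (p i * w i / H) ≤ 0 := by
      rw [Finset.mul_sum, ← Finset.sum_sub_distrib]
      exact key
    rw [ge_iff_le]
    have hrhs : -∑ i, p i * w i * (Real.log (p i * w i / H) / Real.log D) =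
        -((∑ i, p i * w i * Real.log (p i * w i / H)) / Real.log D) := by
      rw [Finset.sum_div]
      congr 1
      exact Finset.sum_congr rfl (fun i _ => by ring)
    rw [hrhs, neg_div', div_le_iff₀ hlogD]
    nlinarith [key2]
end

section
/- (Lemma 1, part 2: tensorization of the importance-aware measure for i.i.d. sequences.) Let D ≥ 2 be an integer, let p : Fin N → ℝ with p i > 0 and ∑ i, p i = 1, let w : Fin N → ℝ with w i > 0, and let n ≥ 1. Define H_w(X) = ∑ i, p i * w i, 𝓛(w,X) = -∑ i, p i * w i * log_D (p i * w i / H_w(X)), and for sequences x : Fin n → Fin N set p(x) = ∏ k, p (x k), w(x) = ∏ k, w (x k), H_w(Xⁿ) = ∑_x p(x) * w(x), and 𝓛(w,Xⁿ) = -∑_x p(x) * w(x) * log_D (p(x) * w(x) / H_w(Xⁿ)). Then 𝓛(w,Xⁿ) = n * (H_w(X))^(n-1) * 𝓛(w,X). -/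
/-!
Since `negMulLog t = -t log t` obeys the Leibniz rule `negMulLog (x y) = y negMulLog x + x negMulLog y`,
summing `negMulLog` of the product weight over all sequences of length `n` gives
`n H^(n-1) ∑ᵢ negMulLog (fᵢ)`, where `fᵢ = pᵢ wᵢ` and `H = ∑ᵢ fᵢ`. Both measures are of the form
`∑ a log (a / ∑ a) = negMulLog (∑ a) - ∑ negMulLog a`, the normaliser of the sequence weights is
`Hⁿ`, and `negMulLog (Hⁿ) = n H^(n-1) negMulLog H`. The base `D` of the logarithm only contributes the
common factor `1 / log D`.
-/

open Finset

namespace Real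

variable {ι : Type*} [Fintype ι]

theorem sum_mul_log_div_sum (a : ι → ℝ) (ha : ∑ i, a i ≠ 0) :
    ∑ i, a i * log (a i / ∑ j, a j) = negMulLog (∑ i, a i) - ∑ i, negMulLog (a i) := by
  have hterm : ∀ i, a i * log (a i / ∑ j, a j) = -negMulLog (a i) - a i * log (∑ j, a j) := by
    intro i
    rcases eq_or_ne (a i) 0 with h | h
    · simp [h]
    · rw [log_div h ha, negMulLog]
      ring
  simp only [hterm, sum_sub_distrib, sum_neg_distrib, ← sum_mul, negMulLog]
  ring

theorem negMulLog_pow (x : ℝ) (n : ℕ) : negMulLog (x ^ n) = n * x ^ (n - 1) * negMulLog x := by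
  cases n with
  | zero => simp
  | succ n =>
    rw [negMulLog, negMulLog, log_pow, add_tsub_cancel_right, pow_succ]
    push_cast
    ring

theorem sum_negMulLog_prod_fin (a : ι → ℝ) (n : ℕ) :
    ∑ x : Fin n → ι, negMulLog (∏ k, a (x k)) =
      n * (∑ i, a i) ^ (n - 1) * ∑ i, negMulLog (a i) := by
  induction n with
  | zero => simp
  | succ n ih =>
    rw [← (Fin.consEquiv fun _ => ι).sum_comp, Fintype.sum_prod_type]
    simp only [Fin.consEquiv_apply, Fin.prod_univ_succ, Fin.cons_zero, Fin.cons_succ,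
      negMulLog_mul, sum_add_distrib, ← mul_sum, ← sum_mul, ih, ← Fintype.sum_pow]
    cases n with
    | zero => simp
    | succ n =>
      simp only [add_tsub_cancel_right, pow_succ]
      push_cast
      ring

theorem sum_prod_mul_log_div_sum_pow (f : ι → ℝ) (n : ℕ) :
    ∑ x : Fin n → ι, (∏ k, f (x k)) * log ((∏ k, f (x k)) / (∑ i, f i) ^ n) =
      n * (∑ i, f i) ^ (n - 1) * ∑ i, f i * log (f i / ∑ i, f i) := by
  rcases eq_or_ne (∑ i, f i) 0 with hH | hH
  · cases n <;> simp [hH]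
  · rw [Fintype.sum_pow, sum_mul_log_div_sum _ (Fintype.sum_pow f n ▸ pow_ne_zero n hH),
      sum_mul_log_div_sum f hH, ← Fintype.sum_pow, negMulLog_pow, sum_negMulLog_prod_fin]
    ring

end Real

theorem iw_measure_tensorization_general
    (N D n : ℕ)
    (p w : Fin N → ℝ) :
    -∑ x : Fin n → Fin N,
        (∏ k, p (x k)) * (∏ k, w (x k)) *
          (Real.log ((∏ k, p (x k)) * (∏ k, w (x k)) /
              ∑ y : Fin n → Fin N, (∏ k, p (y k)) * (∏ k, w (y k))) /
            Real.log D) =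
      (n : ℝ) * (∑ i, p i * w i) ^ (n - 1) *
        (-∑ i, p i * w i *
          (Real.log (p i * w i / ∑ j, p j * w j) / Real.log D)) := by
  have h := Real.sum_prod_mul_log_div_sum_pow (fun i => p i * w i) n
  rw [Fintype.sum_pow] at h
  simp only [← prod_mul_distrib, ← mul_div_assoc, ← sum_div, h]
  ring

/-- Lemma 1, part 2: tensorization of the importance-aware measure for i.i.d. sequences. -/
theorem iw_measure_tensorization
    (N D n : ℕ) (hD : 2 ≤ D) (hn : 1 ≤ n)
    (p w : Fin N → ℝ)
    (hp : ∀ i, 0 < p i) (hpsum : ∑ i, p i = 1)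
    (hw : ∀ i, 0 < w i) :
    -∑ x : Fin n → Fin N,
        (∏ k, p (x k)) * (∏ k, w (x k)) *
          (Real.log ((∏ k, p (x k)) * (∏ k, w (x k)) /
              ∑ y : Fin n → Fin N, (∏ k, p (y k)) * (∏ k, w (y k))) /
            Real.log D) =
      (n : ℝ) * (∑ i, p i * w i) ^ (n - 1) *
        (-∑ i, p i * w i *
          (Real.log (p i * w i / ∑ j, p j * w j) / Real.log D)) :=
  iw_measure_tensorization_general N D n p w
end

section
/- (Theorem 2, lower bound: I-W coding theorem for i.i.d. sequence sources.) Let D ≥ 2 be an integer, let p : Fin N → ℝ with p i > 0 and ∑ i, p i = 1, let w : Fin N → ℝ with w i > 0, and let n ≥ 1. For sequences x : Fin n → Fin N set p(x) = ∏ k, p (x k) and w(x) = ∏ k, w (x k). Then for every length assignment l : (Fin n → Fin N) → ℕ satisfying Kraft's inequality ∑_x (D : ℝ)^(-(l x : ℝ)) ≤ 1, the per-symbol I-W expected codeword length satisfies (1/n) * ∑_x p(x) * w(x) * (l x : ℝ) ≥ (H_w(X))^(n-1) * 𝓛(w,X), where H_w(X) = ∑ i, p i * w i and 𝓛(w,X)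 = -∑ i, p i * w i * log_D (p i * w i / H_w(X)). -/
/-!
With `f = p * w` and `S = ∑ f`, the supersymbol weights `g x = ∏ k, f (x k)` sum to `S ^ n`, and
since `log` turns the product into a sum, `-∑ g log (g / S ^ n) = n S ^ (n - 1) · (-∑ f log (f / S))`.
Gibbs' inequality `log t ≤ t - 1` at `t = S ^ n D ^ (-l x) / g x`, summed and combined with
Kraft's inequality, bounds this weighted entropy by `log D · ∑ g l`.
-/

open Finset Real

variable {ι α R : Type*} [Fintype ι] [DecidableEq ι] [Fintype α] [CommSemiring R]

theorem Fintype.sum_prod_apply_mul_apply (f G : α → R) (k : ι) :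
    ∑ x : ι → α, (∏ j, f (x j)) * G (x k) =
      (∑ a, f a * G a) * (∑ a, f a) ^ (Fintype.card ι - 1) := by
  set F : ι → α → R := Function.update (fun _ => f) k fun a => f a * G a
  have hF_ne : ∀ j ∈ univ.erase k, F j = f := fun j hj =>
    Function.update_of_ne (ne_of_mem_erase hj) _ _
  have hF : ∀ x : ι → α, (∏ j, f (x j)) * G (x k) = ∏ j, F j (x j) := by
    intro x
    rw [← mul_prod_erase _ _ (mem_univ k), ← mul_prod_erase _ _ (mem_univ k), mul_right_comm]
    congr 1
    · simp [F]
    · exact Finset.prod_congr rfl fun j hj => by rw [hF_ne j hj]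
  rw [Fintype.sum_congr _ _ hF, ← Fintype.prod_sum, ← mul_prod_erase _ _ (mem_univ k)]
  congr 1
  · simp [F]
  · rw [Finset.prod_congr rfl fun j hj => by rw [hF_ne j hj], prod_const,
      card_erase_of_mem (mem_univ k), card_univ]

theorem sum_prod_mul_log_prod_div_sum (f : α → ℝ) (hf : ∀ a, 0 < f a) :
    ∑ x : ι → α, (∏ j, f (x j)) * log ((∏ j, f (x j)) / ∑ y : ι → α, ∏ j, f (y j)) =
      Fintype.card ι * (∑ a, f a) ^ (Fintype.card ι - 1) * ∑ a, f a * log (f a / ∑ b, f b) := by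
  rw [← Fintype.prod_sum fun _ : ι => f, prod_const, card_univ]
  set S := ∑ a, f a
  have hS : ∀ a, 0 < S := fun a =>
    (hf a).trans_le (single_le_sum (fun b _ => (hf b).le) (mem_univ a))
  have hlog : ∀ x : ι → α,
      log ((∏ j, f (x j)) / S ^ Fintype.card ι) = ∑ j, log (f (x j) / S) := by
    intro x
    rw [← card_univ, ← prod_const, ← prod_div_distrib, log_prod]
    exact fun j _ => (div_pos (hf _) (hS (x j))).ne'
  calc _ = ∑ x : ι → α, ∑ k, (∏ j, f (x j)) * log (f (x k) / S) := by simp_rw [hlog, mul_sum]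
    _ = ∑ k : ι, (∑ a, f a * log (f a / S)) * S ^ (Fintype.card ι - 1) := by
      rw [sum_comm]
      exact Finset.sum_congr rfl fun k _ =>
        Fintype.sum_prod_apply_mul_apply f (fun a => log (f a / S)) k
    _ = _ := by rw [sum_const, card_univ, nsmul_eq_mul]; ring

theorem neg_sum_mul_log_div_sum_le_of_kraft {β : Type*} [Fintype β] {D : ℝ} (hD : 0 < D)
    (g l : β → ℝ) (hg : ∀ x, 0 < g x) (hkraft : ∑ x, D ^ (-l x) ≤ 1) :
    -∑ x, g x * log (g x / ∑ y, g y) ≤ log D * ∑ x, g x * l x := by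
  set G := ∑ y, g y
  have hterm : ∀ x, -(log D * (g x * l x)) - g x * log (g x / G) ≤ G * D ^ (-l x) - g x := by
    intro x
    have hG : 0 < G := (hg x).trans_le (single_le_sum (fun y _ => (hg y).le) (mem_univ x))
    have hDl : 0 < D ^ (-l x) := rpow_pos_of_pos hD _
    have hq : 0 < g x / G := div_pos (hg x) hG
    calc -(log D * (g x * l x)) - g x * log (g x / G) = g x * log (D ^ (-l x) / (g x / G)) := by
          rw [log_div hDl.ne' hq.ne', log_rpow hD]; ring
      _ ≤ g x * (D ^ (-l x) / (g x / G) - 1) :=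
          mul_le_mul_of_nonneg_left (log_le_sub_one_of_pos (div_pos hDl hq)) (hg x).le
      _ = G * D ^ (-l x) - g x := by field_simp [(hg x).ne']
  have hsum : ∑ x, (-(log D * (g x * l x)) - g x * log (g x / G)) ≤ 0 :=
    calc _ ≤ ∑ x, (G * D ^ (-l x) - g x) := sum_le_sum fun x _ => hterm x
      _ = G * (∑ x, D ^ (-l x) - 1) := by rw [sum_sub_distrib, ← mul_sum]; ring
      _ ≤ 0 := mul_nonpos_of_nonneg_of_nonpos (sum_nonneg fun y _ => (hg y).le) (by linarith)
  rw [sum_sub_distrib, sum_neg_distrib, ← mul_sum] at hsum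
  linarith

theorem iw_coding_sequence_lower_general
    (N D n : ℕ) (hD : 2 ≤ D) (hn : 1 ≤ n)
    (p w : Fin N → ℝ)
    (hp : ∀ i, 0 < p i)
    (hw : ∀ i, 0 < w i)
    (l : (Fin n → Fin N) → ℕ)
    (hkraft : ∑ x : Fin n → Fin N, (D : ℝ) ^ (-(l x : ℝ)) ≤ 1) :
    (1 / (n : ℝ)) *
        ∑ x : Fin n → Fin N, (∏ k, p (x k)) * (∏ k, w (x k)) * (l x : ℝ) ≥
      (∑ i, p i * w i) ^ (n - 1) *
        (-∑ i, p i * w i *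
          (Real.log (p i * w i / ∑ j, p j * w j) / Real.log D)) := by
  have hf : ∀ i, 0 < p i * w i := fun i => mul_pos (hp i) (hw i)
  have hlogD : 0 < log D := log_pos (by exact_mod_cast hD)
  have hn₀ : (0 : ℝ) < n := by exact_mod_cast hn
  have key := neg_sum_mul_log_div_sum_le_of_kraft (by positivity)
    (fun x : Fin n → Fin N => ∏ k, p (x k) * w (x k)) (fun x => (l x : ℝ))
    (fun x => prod_pos fun k _ => hf (x k)) hkraft
  rw [sum_prod_mul_log_prod_div_sum _ hf, Fintype.card_fin] at key
  simp_rw [← prod_mul_distrib, mul_div_assoc', ← sum_div]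
  calc _ = -(n * (∑ i, p i * w i) ^ (n - 1) * ∑ i, p i * w i * log (p i * w i / ∑ j, p j * w j))
        / (n * log D) := by field_simp
    _ ≤ (log D * ∑ x : Fin n → Fin N, (∏ k, p (x k) * w (x k)) * l x) / (n * log D) := by
        gcongr
    _ = _ := by field_simp

/-- Theorem 2, lower bound: I-W coding theorem for i.i.d. sequence sources. -/
theorem iw_coding_sequence_lower
    (N D n : ℕ) (hD : 2 ≤ D) (hn : 1 ≤ n)
    (p w : Fin N → ℝ)
    (hp : ∀ i, 0 < p i) (hpsum : ∑ i, p i = 1)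
    (hw : ∀ i, 0 < w i)
    (l : (Fin n → Fin N) → ℕ)
    (hkraft : ∑ x : Fin n → Fin N, (D : ℝ) ^ (-(l x : ℝ)) ≤ 1) :
    (1 / (n : ℝ)) *
        ∑ x : Fin n → Fin N, (∏ k, p (x k)) * (∏ k, w (x k)) * (l x : ℝ) ≥
      (∑ i, p i * w i) ^ (n - 1) *
        (-∑ i, p i * w i *
          (Real.log (p i * w i / ∑ j, p j * w j) / Real.log D)) :=
  iw_coding_sequence_lower_general N D n hD hn p w hp hw l hkraft
end

section
/- (Theorem 2, upper bound: I-W coding theorem for i.i.d. sequence sources.) Let D ≥ 2 be an integer, let p : Fin N → ℝ with p i > 0 and ∑ i, p i = 1, let w : Fin N → ℝ with w i > 0, and let n ≥ 1. For sequences x : Fin n → Fin N set p(x) = ∏ k, p (x k) and w(x) = ∏ k, w (x k). Then there exists a length assignment l : (Fin n → Fin N) → ℕ satisfying Kraft's inequality ∑_x (D : ℝ)^(-(l x : ℝ)) ≤ 1 such that (1/n) * ∑_x p(x) * w(x) * (l x : ℝ) < (H_w(X))^(n-1) * 𝓛(w,X) + (H_w(X))^n / n, where H_w(X) = ∑ i,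 p i * w i and 𝓛(w,X) = -∑ i, p i * w i * log_D (p i * w i / H_w(X)). -/
/-!
Use Shannon code lengths `l x = ⌈-log_D q x⌉` for the normalized product distribution
`q x = p(x) w(x) / H_w(X)^n`. Kraft's inequality holds because `D^(-l x) ≤ q x`, and
`l x < -log_D q x + 1`. As `-log_D q x` is additive over the coordinates of `x`, its
`p(x) w(x)`-weighted sum is `n H_w(X)^(n-1) 𝓛(w,X)`, while the weighted sum of the `1`s is
`H_w(X)^n`.
-/

open Finset Real

section ProductSums

variable {κ ι R : Type*} [Fintype κ] [DecidableEq κ] [Fintype ι] [CommSemiring R]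

theorem sum_prod_mul_apply (g f : ι → R) (k : κ) :
    ∑ x : κ → ι, (∏ j, g (x j)) * f (x k) =
      (∑ i, g i) ^ (Fintype.card κ - 1) * ∑ i, g i * f i := by
  have hx (x : κ → ι) :
      (∏ j, g (x j)) * f (x k) = ∏ j, g (x j) * if j = k then f (x j) else 1 := by
    rw [prod_mul_distrib, Fintype.prod_ite_eq']
  have hj (j : κ) : ∑ i, (g i * if j = k then f i else 1) =
      Function.update (fun _ => ∑ i, g i) k (∑ i, g i * f i) j := by
    rcases eq_or_ne j k with rfl | hjk <;> simp [*]
  simp_rw [hx]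
  rw [← Fintype.prod_sum (fun j i => g i * if j = k then f i else 1)]
  simp_rw [hj]
  rw [prod_update_of_mem (mem_univ k), prod_const, ← compl_eq_univ_sdiff, card_compl,
    card_singleton, mul_comm]

theorem sum_prod_mul_sum_apply (g f : ι → R) :
    ∑ x : κ → ι, (∏ j, g (x j)) * ∑ j, f (x j) =
      Fintype.card κ * (∑ i, g i) ^ (Fintype.card κ - 1) * ∑ i, g i * f i := by
  calc ∑ x : κ → ι, (∏ j, g (x j)) * ∑ j, f (x j)
      = ∑ k, ∑ x : κ → ι, (∏ j, g (x j)) * f (x k) := by simp_rw [mul_sum]; exact sum_comm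
    _ = _ := by simp only [sum_prod_mul_apply, sum_const, card_univ, nsmul_eq_mul, mul_assoc]

end ProductSums

noncomputable def shannonLength (b q : ℝ) : ℕ := ⌈-logb b q⌉₊

section ShannonLength

variable {b q : ℝ}

theorem rpow_neg_shannonLength_le (hb : 1 < b) (hq : 0 < q) :
    b ^ (-(shannonLength b q : ℝ)) ≤ q :=
  calc b ^ (-(shannonLength b q : ℝ)) ≤ b ^ logb b q :=
        rpow_le_rpow_of_exponent_le hb.le (neg_le.1 (Nat.le_ceil _))
    _ = q := rpow_logb (by linarith) hb.ne' hq

theorem shannonLength_lt (hb : 1 < b) (hq : 0 < q) (hq₁ : q ≤ 1) :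
    (shannonLength b q : ℝ) < -logb b q + 1 :=
  Nat.ceil_lt_add_one (neg_nonneg.2 (logb_nonpos hb hq.le hq₁))

variable {α : Type*} [Fintype α]

theorem sum_rpow_neg_shannonLength_le_one {q : α → ℝ} (hb : 1 < b) (hq : ∀ x, 0 < q x)
    (hsum : ∑ x, q x ≤ 1) :
    ∑ x, b ^ (-(shannonLength b (q x) : ℝ)) ≤ 1 :=
  (sum_le_sum fun x _ => rpow_neg_shannonLength_le hb (hq x)).trans hsum

theorem sum_mul_shannonLength_lt [Nonempty α] {G q : α → ℝ} (hb : 1 < b) (hG : ∀ x, 0 < G x)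
    (hq : ∀ x, 0 < q x) (hq₁ : ∀ x, q x ≤ 1) :
    ∑ x, G x * shannonLength b (q x) < ∑ x, G x * -logb b (q x) + ∑ x, G x := by
  rw [← sum_add_distrib]
  refine sum_lt_sum_of_nonempty univ_nonempty fun x _ => ?_
  rw [← mul_add_one]
  exact mul_lt_mul_of_pos_left (shannonLength_lt hb (hq x) (hq₁ x)) (hG x)

end ShannonLength

theorem sum_prod_mul_neg_logb_prod {κ ι : Type*} [Fintype κ] [DecidableEq κ] [Fintype ι]
    (b : ℝ) (g q : ι → ℝ) (hq : ∀ i, q i ≠ 0) :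
    ∑ x : κ → ι, (∏ j, g (x j)) * -logb b (∏ j, q (x j)) =
      Fintype.card κ * (∑ i, g i) ^ (Fintype.card κ - 1) * ∑ i, g i * -logb b (q i) := by
  simp_rw [logb_prod _ _ fun j _ => hq _, ← sum_neg_distrib]
  exact sum_prod_mul_sum_apply g fun i => -logb b (q i)

/-- Theorem 2, upper bound: I-W coding theorem for i.i.d. sequence sources. -/
theorem iw_coding_sequence_upper
    (N D n : ℕ) (hD : 2 ≤ D) (hn : 1 ≤ n)
    (p w : Fin N → ℝ)
    (hp : ∀ i, 0 < p i) (hpsum : ∑ i, p i = 1)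
    (hw : ∀ i, 0 < w i) :
    ∃ l : (Fin n → Fin N) → ℕ,
      (∑ x : Fin n → Fin N, (D : ℝ) ^ (-(l x : ℝ)) ≤ 1) ∧
      (1 / (n : ℝ)) *
          ∑ x : Fin n → Fin N, (∏ k, p (x k)) * (∏ k, w (x k)) * (l x : ℝ) <
        (∑ i, p i * w i) ^ (n - 1) *
          (-∑ i, p i * w i *
            (Real.log (p i * w i / ∑ j, p j * w j) / Real.log D)) +
        (∑ i, p i * w i) ^ n / (n : ℝ) := by
  have : Nonempty (Fin N) :=
    Fin.pos_iff_nonempty.1 (Nat.pos_of_ne_zero (by rintro rfl; simp at hpsum))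
  have hD₁ : (1 : ℝ) < D := by exact_mod_cast hD
  set g : Fin N → ℝ := fun i => p i * w i
  have hg (i : Fin N) : 0 < g i := mul_pos (hp i) (hw i)
  set H := ∑ i, g i
  have hH : 0 < H := sum_pos (fun i _ => hg i) univ_nonempty
  set q : Fin N → ℝ := fun i => g i / H
  have hq (i : Fin N) : 0 < q i := div_pos (hg i) hH
  set Q : (Fin n → Fin N) → ℝ := fun x => ∏ k, q (x k)
  have hQ (x : Fin n → Fin N) : 0 < Q x := prod_pos fun k _ => hq (x k)
  have hQsum : ∑ x, Q x = 1 := by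
    rw [← Fintype.sum_pow, ← sum_div, div_self hH.ne', one_pow]
  have hQ₁ (x : Fin n → Fin N) : Q x ≤ 1 :=
    hQsum ▸ single_le_sum (fun y _ => (hQ y).le) (mem_univ x)
  refine ⟨fun x => shannonLength D (Q x),
    sum_rpow_neg_shannonLength_le_one hD₁ hQ hQsum.le, ?_⟩
  have hlen := sum_mul_shannonLength_lt (G := fun x => ∏ k, g (x k)) hD₁
    (fun x => prod_pos fun k _ => hg (x k)) hQ hQ₁
  rw [sum_prod_mul_neg_logb_prod _ _ _ fun i => (hq i).ne', ← Fintype.sum_pow,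
    Fintype.card_fin] at hlen
  simp_rw [← prod_mul_distrib]
  have hn₀ : (0 : ℝ) < n := by exact_mod_cast hn
  calc 1 / (n : ℝ) * ∑ x : Fin n → Fin N, (∏ k, g (x k)) * shannonLength D (Q x)
      < 1 / n * (n * H ^ (n - 1) * ∑ i, g i * -logb D (q i) + H ^ n) := by gcongr
    _ = H ^ (n - 1) * ∑ i, g i * -logb D (q i) + H ^ n / n := by field_simp
    _ = _ := by simp only [mul_neg, sum_neg_distrib, logb]; rfl
end

section
/- (Corollary 1, lower bound: MIM-weighted coding theorem for a single source.) Let D ≥ 2 be an integer, let p : Fin N → ℝ be a probability distribution with p i > 0 for all i and ∑ i, p i = 1, and let ω ∈ ℝ. Define MIM(X;ω) = ∑ j, p j * exp (ω * (1 - p j)) and MIM_N(i;ω) = p i * exp (ω * (1 - p i)) / MIM(X;ω). Then for every length assignment l : Fin N → ℕ satisfying Kraft's inequality ∑ i, (D : ℝ)^(-(l i : ℝ)) ≤ 1, one has ∑ i, MIM_N(i;ω) * (l i : ℝ) ≥ H_MIM(X;ω), where H_MIM(X;ω) = -∑ i, MIM_N(i;ω) * log_D (MIM_N(i;ω)). 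-/
/-- Corollary 1, lower bound: MIM-weighted coding theorem for a single source. -/
theorem mim_coding_single_lower
    (N D : ℕ) (hD : 2 ≤ D)
    (p : Fin N → ℝ)
    (hp : ∀ i, 0 < p i) (hpsum : ∑ i, p i = 1)
    (ω : ℝ)
    (l : Fin N → ℕ)
    (hkraft : ∑ i, (D : ℝ) ^ (-(l i : ℝ)) ≤ 1) :
    ∑ i, (p i * Real.exp (ω * (1 - p i)) /
          ∑ j, p j * Real.exp (ω * (1 - p j))) * (l i : ℝ) ≥
      -∑ i, (p i * Real.exp (ω * (1 - p i)) /
            ∑ j, p j * Real.exp (ω * (1 - p j))) *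
          (Real.log (p i * Real.exp (ω * (1 - p i)) /
              ∑ j, p j * Real.exp (ω * (1 - p j))) / Real.log D) := by
  set S : ℝ := ∑ j, p j * Real.exp (ω * (1 - p j)) with hS
  have hN : (Finset.univ : Finset (Fin N)).Nonempty := by
    by_contra h
    rw [Finset.not_nonempty_iff_eq_empty] at h
    rw [h, Finset.sum_empty] at hpsum
    norm_num at hpsum
  have hSpos : 0 < S := by
    exact Finset.sum_pos (fun j _ => mul_pos (hp j) (Real.exp_pos _)) hN
  set q : Fin N → ℝ := fun i => p i * Real.exp (ω * (1 - p i)) / S with hq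
  have hqpos : ∀ i, 0 < q i := fun i => by
    have := hp i; positivity
  have hqsum : ∑ i, q i = 1 := by
    rw [hq, ← Finset.sum_div, ← hS, div_self hSpos.ne']
  set r : Fin N → ℝ := fun i => (D : ℝ) ^ (-(l i : ℝ)) with hr
  have hDpos : (0:ℝ) < D := by positivity
  have hrpos : ∀ i, 0 < r i := fun i => Real.rpow_pos_of_pos hDpos _
  have hlogD : 0 < Real.log D := Real.log_pos (by exact_mod_cast hD.trans_lt' one_lt_two)
  -- key pointwise inequality
  have key : ∀ i, q i * (Real.log (q i) + (l i : ℝ) * Real.log D) ≥ q i - r i := by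
    intro i
    have hlogr : Real.log (r i) = -(l i : ℝ) * Real.log D := Real.log_rpow hDpos _
    have h1 : Real.log (r i / q i) ≤ r i / q i - 1 :=
      Real.log_le_sub_one_of_pos (div_pos (hrpos i) (hqpos i))
    have h2 : Real.log (r i / q i) = Real.log (r i) - Real.log (q i) :=
      Real.log_div (hrpos i).ne' (hqpos i).ne'
    have h3 : Real.log (q i) + (l i : ℝ) * Real.log D ≥ 1 - r i / q i := by
      rw [h2, hlogr] at h1; linarith
    have h4 : q i * (Real.log (q i) + (l i : ℝ) * Real.log D) ≥ q i * (1 - r i / q i) :=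
      mul_le_mul_of_nonneg_left h3 (hqpos i).le
    calc q i * (Real.log (q i) + (l i : ℝ) * Real.log D)
        ≥ q i * (1 - r i / q i) := h4
      _ = q i - r i := by
        rw [mul_sub, mul_one, mul_div_cancel₀ _ (hqpos i).ne']
  have hsum : ∑ i, q i * (Real.log (q i) + (l i : ℝ) * Real.log D) ≥ 0 := by
    calc ∑ i, q i * (Real.log (q i) + (l i : ℝ) * Real.log D)
        ≥ ∑ i, (q i - r i) := Finset.sum_le_sum (fun i _ => key i)
      _ = 1 - ∑ i, r i := by rw [Finset.sum_sub_distrib, hqsum]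
      _ ≥ 0 := by linarith [hkraft]
  have expand : ∑ i, q i * (Real.log (q i) + (l i : ℝ) * Real.log D)
      = ∑ i, q i * Real.log (q i) + (∑ i, q i * (l i : ℝ)) * Real.log D := by
    rw [Finset.sum_mul, ← Finset.sum_add_distrib]
    congr 1; ext i; ring
  have final : ∑ i, q i * (l i : ℝ) ≥ -∑ i, q i * (Real.log (q i) / Real.log D) := by
    rw [expand] at hsum
    have : -∑ i, q i * (Real.log (q i) / Real.log D)
        = (-∑ i, q i * Real.log (q i)) / Real.log D := by
      rw [neg_div, neg_inj, Finset.sum_div]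
      exact Finset.sum_congr rfl fun i _ => (mul_div_assoc _ _ _).symm
    rw [this, ge_iff_le, div_le_iff₀ hlogD]
    linarith
  exact final
end

section
/- (Corollary 1, upper bound: MIM-weighted coding theorem for a single source.) Let D ≥ 2 be an integer, let p : Fin N → ℝ be a probability distribution with p i > 0 for all i and ∑ i, p i = 1, and let ω ∈ ℝ. Define MIM(X;ω) = ∑ j, p j * exp (ω * (1 - p j)) and MIM_N(i;ω) = p i * exp (ω * (1 - p i)) / MIM(X;ω). Then there exists a length assignment l : Fin N → ℕ satisfying Kraft's inequality ∑ i, (D : ℝ)^(-(l i : ℝ)) ≤ 1 such that ∑ i, MIM_N(i;ω) * (l i : ℝ) < H_MIM(X;ω) + 1, where H_MIM(X;ω) = -∑ i, MIM_N(i;ω) * log_D (MIM_N(i;ω)). -/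
/-- Corollary 1, upper bound: MIM-weighted coding theorem for a single source. -/
theorem mim_coding_single_upper
    (N D : ℕ) (hD : 2 ≤ D)
    (p : Fin N → ℝ)
    (hp : ∀ i, 0 < p i) (hpsum : ∑ i, p i = 1)
    (ω : ℝ) :
    ∃ l : Fin N → ℕ,
      (∑ i, (D : ℝ) ^ (-(l i : ℝ)) ≤ 1) ∧
      ∑ i, (p i * Real.exp (ω * (1 - p i)) /
            ∑ j, p j * Real.exp (ω * (1 - p j))) * (l i : ℝ) <
        (-∑ i, (p i * Real.exp (ω * (1 - p i)) /
              ∑ j, p j * Real.exp (ω * (1 - p j))) *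
            (Real.log (p i * Real.exp (ω * (1 - p i)) /
                ∑ j, p j * Real.exp (ω * (1 - p j))) / Real.log D)) + 1 := by
  rcases Nat.eq_zero_or_pos N with hN | hN
  · subst hN
    exact ⟨fun i => 0, by simp⟩
  have hNne : (Finset.univ : Finset (Fin N)).Nonempty := by
    haveI := Fin.pos_iff_nonempty.mp hN
    exact Finset.univ_nonempty
  set M : ℝ := ∑ j, p j * Real.exp (ω * (1 - p j)) with hM
  have hMpos : 0 < M :=
    Finset.sum_pos (fun j _ => mul_pos (hp j) (Real.exp_pos _)) hNne
  set q : Fin N → ℝ := fun i => p i * Real.exp (ω * (1 - p i)) / M with hq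
  have hqpos : ∀ i, 0 < q i := fun i =>
    div_pos (mul_pos (hp i) (Real.exp_pos _)) hMpos
  have hqsum : ∑ i, q i = 1 := by
    rw [hq]
    rw [← Finset.sum_div, ← hM, div_self hMpos.ne']
  have hq1 : ∀ i, q i ≤ 1 := by
    intro i
    rw [← hqsum]
    exact Finset.single_le_sum (fun j _ => (hqpos j).le) (Finset.mem_univ i)
  have hD1 : (1 : ℝ) < (D : ℝ) := by exact_mod_cast lt_of_lt_of_le one_lt_two (by exact_mod_cast hD)
  set l : Fin N → ℕ := fun i => ⌈-Real.logb D (q i)⌉₊ with hl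
  have hlogb_nonneg : ∀ i, 0 ≤ -Real.logb D (q i) := by
    intro i
    simp only [neg_nonneg]
    exact Real.logb_nonpos hD1 (hqpos i).le (hq1 i)
  refine ⟨l, ?_, ?_⟩
  · calc ∑ i, (D : ℝ) ^ (-(l i : ℝ)) ≤ ∑ i, q i := by
          apply Finset.sum_le_sum
          intro i _
          have h1 : -Real.logb D (q i) ≤ (l i : ℝ) := Nat.le_ceil _
          have h2 : (-(l i : ℝ)) ≤ Real.logb D (q i) := by linarith
          calc (D : ℝ) ^ (-(l i : ℝ)) ≤ (D : ℝ) ^ Real.logb D (q i) :=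
                (Real.rpow_le_rpow_left_iff hD1).mpr h2
            _ = q i := Real.rpow_logb (by linarith) (by linarith) (hqpos i)
      _ = 1 := hqsum
  · have key : ∑ i, q i * (l i : ℝ) < ∑ i, q i * (-Real.logb D (q i) + 1) := by
      apply Finset.sum_lt_sum_of_nonempty hNne
      intro i _
      apply mul_lt_mul_of_pos_left _ (hqpos i)
      exact Nat.ceil_lt_add_one (hlogb_nonneg i)
    have expand : ∑ i, q i * (-Real.logb D (q i) + 1)
        = (-∑ i, q i * Real.logb D (q i)) + 1 := by
      simp only [mul_add, mul_one, mul_neg]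
      rw [Finset.sum_add_distrib, Finset.sum_neg_distrib, hqsum]
    rw [expand] at key
    simpa [Real.logb] using key
end
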